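/- Let 𝔤 be an n-dimensional real nilpotent Lie algebra with a nice basis, structure constants c = (c_I), and root matrix M_Δ whose mod-2 reduction M_{Δ,2} is surjective. Suppose the linear system M_Δᵀ X = (1,…,1) admits a solution X (which is then unique, since surjectivity of M_Δ makes M_Δᵀ injective). Define c' by c'_I = c_I when x_I ≠ 0 and c'_I = 0 when x_I = 0. Then c' satisfies the Jacobi identity and defines a nilpotent Lie algebra 𝔤' (equal to 𝔤 when all x_I ≠ 0) for which the given basis is nice, c' lies in the closure of the orbit of c under the diagonal rescalings e^{M_Δ}(D_n) (i.e., 𝔤' is a contraction limit of 𝔤), and 𝔤' admits a diagonal metric satisfying condition (E) (ric = ½ id). Moreover 𝔤' is the unique such contraction limit: any contraction limit of 𝔤 (obtained by setting some structure constants to zero) admitting a diagonal metric satisfying (E) keeps exactly the brackets I with x_I ≠ 0. -/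

import Mathlib

open scoped BigOperators

/-- The bilinear bracket on `Fin n → ℝ` determined by structure constants `c`. -/
def bracket {n : ℕ} (c : Fin n → Fin n → Fin n → ℝ) (x y : Fin n → ℝ) : Fin n → ℝ :=
  fun k => ∑ i, ∑ j, x i * y j * c i j k

/-- `c` is the family of structure constants of a nilpotent Lie algebra for which
the standard basis of `Fin n → ℝ` is a nice basis. -/
structure IsNiceNilpotent {n : ℕ} (c : Fin n → Fin n → Fin n → ℝ) : Prop where
  skew : ∀ i j k, c i j k = - c j i k
  jacobi : ∀ x y z : Fin n → ℝ,
    bracket c (bracket c x y) z + bracket c (bracket c y z) x + bracket c (bracket c z x) y = 0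
  nilpotent : ∃ N : ℕ, ∀ (v : Fin N → Fin n → ℝ) (w : Fin n → ℝ),
    (List.ofFn v).foldr (bracket c) w = 0
  nice_k : ∀ i j k k', c i j k ≠ 0 → c i j k' ≠ 0 → k = k'
  nice_j : ∀ i j j' k, c i j k ≠ 0 → c i j' k ≠ 0 → j = j'

/-- Entry `h` of the row of the root matrix indexed by a bracket `[e i, e j] = c i j k • e k`:
the row vector `- eⁱ - eʲ + eᵏ`. -/
def rootRow {n : ℕ} (i j k h : Fin n) : ℤ :=
  (if k = h then 1 else 0) - (if i = h then 1 else 0) - (if j = h then 1 else 0)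

/-- The mod 2 reduction of the root matrix entries. -/
def rootRow2 {n : ℕ} (i j k h : Fin n) : ZMod 2 := ((rootRow i j k h : ℤ) : ZMod 2)

/-- The Ricci operator of the scalar product with matrix `g` in the nice basis,
`ric_h^k = ¼ g^{im} g^{lp} g_{hq} c_{ilk} c_{mpq} − ½ g^{km} g^{jp} g_{iq} c_{hji} c_{mpq}`. -/
noncomputable def Ric {n : ℕ} (c : Fin n → Fin n → Fin n → ℝ)
    (g : Matrix (Fin n) (Fin n) ℝ) : Matrix (Fin n) (Fin n) ℝ :=
  Matrix.of fun h k =>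
    (1/4 : ℝ) * (∑ i, ∑ m, ∑ l, ∑ p, ∑ q,
        g⁻¹ i m * g⁻¹ l p * g h q * c i l k * c m p q)
    - (1/2 : ℝ) * (∑ m, ∑ j, ∑ p, ∑ i, ∑ q,
        g⁻¹ k m * g⁻¹ j p * g i q * c h j i * c m p q)

/-- Condition (E): the Ricci operator equals `½ id`. -/
def EinsteinE {n : ℕ} (c : Fin n → Fin n → Fin n → ℝ)
    (g : Matrix (Fin n) (Fin n) ℝ) : Prop :=
  Ric c g = (1/2 : ℝ) • (1 : Matrix (Fin n) (Fin n) ℝ)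

/-- The matrix of the `σ`-diagonal bilinear form `∑ᵢ gᵢ eⁱ ⊗ e^{σ i}`. -/
def sigmaDiag {n : ℕ} (σ : Equiv.Perm (Fin n)) (gv : Fin n → ℝ) :
    Matrix (Fin n) (Fin n) ℝ :=
  Matrix.of fun i j => if σ i = j then gv i else 0

/-- `σ` is a diagram involution: it squares to the identity and preserves the
set of nonzero structure constants. -/
def IsDiagramInvolution {n : ℕ} (c : Fin n → Fin n → Fin n → ℝ)
    (σ : Equiv.Perm (Fin n)) : Prop :=
  (∀ i, σ (σ i) = i) ∧ ∀ i j k, c i j k ≠ 0 → c (σ i) (σ j) (σ k) ≠ 0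

/-- The mod 2 root matrix `M_{Δ,2}` is surjective: every vector indexed by the brackets
`I_Δ` is of the form `M_{Δ,2} s`. -/
def SurjectiveType {n : ℕ} (c : Fin n → Fin n → Fin n → ℝ) : Prop :=
  ∀ y : Fin n → Fin n → Fin n → ZMod 2, ∃ s : Fin n → ZMod 2,
    ∀ i j k, i < j → c i j k ≠ 0 → y i j k = ∑ h, rootRow2 i j k h * s h

/-!
Since `M_{Δ,2}` is surjective, an integer lift `B` of a right inverse of `M_{Δ,2}` makes
`det (M_Δ B)` odd, so `M_Δ` is surjective over `ℝ` and `M_Δᵀ` is injective. Hence the diagonal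
group acts transitively on `(ℝ^*)^{I_Δ}`: moduli are prescribed through logarithms, signs through
the mod 2 system. In particular every skew-symmetric subdiagram of `c` is a limit of rescalings
of `c`, and inherits the Jacobi identity and nilpotency by closedness.

For a diagonal metric `g` on a nice Lie algebra the Ricci operator is diagonal, and `ric = ½ id`
says exactly that the weights `c_I² g_k / (g_i g_j)` solve `M_Δᵀ x = (1,…,1)`. By injectivity
they equal `X`, which pins down the support of any contraction admitting such a metric;
conversely, transitivity yields a metric whose weights are `X` on the support of `X`.
-/

namespace Matrix

variable {m n K : Type*} [Fintype m] [DecidableEq m] [Fintype n] [Field K] [CharZero K]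

theorem exists_map_intCast_mul_eq_one_of_zmod {p : ℕ} [Fact (1 < p)] (A : Matrix m n ℤ)
    (h : ∃ B : Matrix n m (ZMod p), A.map (Int.cast : ℤ → ZMod p) * B = 1) :
    ∃ B : Matrix n m K, A.map (Int.cast : ℤ → K) * B = 1 := by
  obtain ⟨B, hB⟩ := h
  let B' : Matrix n m ℤ := B.map fun x => (x.cast : ℤ)
  have hB' : (A * B').map (Int.castRingHom (ZMod p)) = 1 := by
    rw [Matrix.map_mul, ← hB]
    congr
    ext i j
    simp [B']
  have hdet : (A * B').det ≠ 0 := by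
    intro h0
    have := (Int.castRingHom (ZMod p)).map_det (A * B')
    rw [h0, RingHom.mapMatrix_apply, hB', det_one, map_zero] at this
    exact zero_ne_one this
  have hC : IsUnit ((A * B').map (Int.castRingHom K)).det := by
    rw [isUnit_iff_ne_zero, ← RingHom.mapMatrix_apply, ← RingHom.map_det]
    simpa using hdet
  refine ⟨B'.map (Int.castRingHom K) * ((A * B').map (Int.castRingHom K))⁻¹, ?_⟩
  rw [← Matrix.mul_assoc, show A.map (Int.cast : ℤ → K) = A.map (Int.castRingHom K) from rfl,
    ← Matrix.map_mul, mul_nonsing_inv _ hC]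

end Matrix

theorem Fintype.sum_sum_eq_two_mul_sum_sum_lt {α R : Type*} [Fintype α] [LinearOrder α]
    [NonAssocSemiring R] {F : α → α → R} (hsymm : ∀ i j, F i j = F j i) (hdiag : ∀ i, F i i = 0) :
    ∑ i, ∑ j, F i j = 2 * ∑ i, ∑ j, if i < j then F i j else 0 := by
  calc ∑ i, ∑ j, F i j
      = ∑ i, ∑ j, ((if i < j then F i j else 0) + if j < i then F j i else 0) := by
        refine Fintype.sum_congr _ _ fun i => Fintype.sum_congr _ _ fun j => ?_
        rcases lt_trichotomy i j with h | rfl | h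
        · simp [h, h.not_gt]
        · simp [hdiag]
        · simp [h, h.not_gt, hsymm i j]
    _ = 2 * ∑ i, ∑ j, if i < j then F i j else 0 := by
        simp only [Finset.sum_add_distrib]
        rw [Finset.sum_comm (f := fun i j => if j < i then F j i else 0), two_mul]

section RootMatrix

variable {n : ℕ}

theorem sum_rootRow_mul {R : Type*} [CommRing R] (i j k : Fin n) (a : Fin n → R) :
    ∑ h, (rootRow i j k h : R) * a h = a k - a i - a j := by
  simp [rootRow, sub_mul, Finset.sum_sub_distrib, ite_mul]

theorem rootRow_comm (i j k h : Fin n) : rootRow i j k h = rootRow j i k h := by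
  unfold rootRow; ring

theorem sum_mul_rootRow {R : Type*} [CommRing R] (w : Fin n → Fin n → Fin n → R) (h : Fin n) :
    ∑ i, ∑ j, ∑ l, w i j l * (rootRow i j l h : R) =
      ∑ i, ∑ j, w i j h - ∑ j, ∑ l, w h j l - ∑ i, ∑ l, w i h l := by
  simp only [rootRow, Int.cast_sub, Int.cast_ite, Int.cast_one, Int.cast_zero, mul_sub, mul_ite,
    mul_one, mul_zero, Finset.sum_sub_distrib, Finset.sum_ite_irrel, Finset.sum_const_zero,
    Finset.sum_ite_eq', Finset.mem_univ, if_true]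

noncomputable def nonzeroBrackets (c : Fin n → Fin n → Fin n → ℝ) :
    Finset (Fin n × Fin n × Fin n) :=
  Finset.univ.filter fun p => p.1 < p.2.1 ∧ c p.1 p.2.1 p.2.2 ≠ 0

theorem mem_nonzeroBrackets {c : Fin n → Fin n → Fin n → ℝ} {p : Fin n × Fin n × Fin n} :
    p ∈ nonzeroBrackets c ↔ p.1 < p.2.1 ∧ c p.1 p.2.1 p.2.2 ≠ 0 := by
  simp [nonzeroBrackets]

theorem sum_nonzeroBrackets {M : Type*} [AddCommMonoid M] {c : Fin n → Fin n → Fin n → ℝ}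
    {f : Fin n → Fin n → Fin n → M} (hf : ∀ i j k, ¬(i < j ∧ c i j k ≠ 0) → f i j k = 0) :
    ∑ I : nonzeroBrackets c, f I.1.1 I.1.2.1 I.1.2.2 = ∑ i, ∑ j, ∑ k, f i j k := by
  rw [Finset.sum_coe_sort (nonzeroBrackets c) fun p => f p.1 p.2.1 p.2.2, nonzeroBrackets,
    Finset.sum_filter_of_ne fun p _ hp => not_not.mp (mt (hf p.1 p.2.1 p.2.2) hp),
    Fintype.sum_prod_type]
  simp only [Fintype.sum_prod_type]

def rootMatrix (c : Fin n → Fin n → Fin n → ℝ) : Matrix (nonzeroBrackets c) (Fin n) ℤ :=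
  Matrix.of fun I h => rootRow I.1.1 I.1.2.1 I.1.2.2 h

end RootMatrix

theorem neg_one_pow_val_sub_sub (u v w : ZMod 2) :
    (-1 : ℝ) ^ (u - v - w).val = (-1) ^ u.val / ((-1) ^ v.val * (-1) ^ w.val) := by
  fin_cases u <;> fin_cases v <;> fin_cases w <;> simp +decide [ZMod.val]

section DiagonalOrbit

variable {n : ℕ}

def diagOrbit (c : Fin n → Fin n → Fin n → ℝ) : Set (Fin n → Fin n → Fin n → ℝ) :=
  {cc | ∃ d : Fin n → ℝ, (∀ i, d i ≠ 0) ∧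
    ∀ i j k : Fin n, cc i j k = d k / (d i * d j) * c i j k}

@[fun_prop]
theorem Continuous.bracket {T : Type*} [TopologicalSpace T] {f : T → Fin n → Fin n → Fin n → ℝ}
    {x y : T → Fin n → ℝ} (hf : Continuous f) (hx : Continuous x) (hy : Continuous y) :
    Continuous fun t => bracket (f t) (x t) (y t) := by
  unfold _root_.bracket
  fun_prop

theorem continuous_foldr_bracket (l : List (Fin n → ℝ)) (w : Fin n → ℝ) :
    Continuous fun cc : Fin n → Fin n → Fin n → ℝ => l.foldr (bracket cc) w := by
  induction l with
  | nil => exact continuous_const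
  | cons u l ih => simp only [List.foldr_cons]; fun_prop

variable {c cc : Fin n → Fin n → Fin n → ℝ} {d : Fin n → ℝ}

theorem bracket_eq_mul_bracket_div (hd : ∀ i, d i ≠ 0)
    (hcc : ∀ i j k, cc i j k = d k / (d i * d j) * c i j k) (x y : Fin n → ℝ) :
    bracket cc x y = d * bracket c (x / d) (y / d) := by
  funext k
  simp only [bracket, Pi.mul_apply, Pi.div_apply, Finset.mul_sum, hcc]
  refine Finset.sum_congr rfl fun i _ => Finset.sum_congr rfl fun j _ => ?_
  field_simp [hd i, hd j, hd k]

theorem bracket_div (hd : ∀ i, d i ≠ 0)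
    (hcc : ∀ i j k, cc i j k = d k / (d i * d j) * c i j k) (x y : Fin n → ℝ) :
    bracket cc x y / d = bracket c (x / d) (y / d) := by
  funext k
  rw [bracket_eq_mul_bracket_div hd hcc, Pi.div_apply, Pi.mul_apply, mul_div_cancel_left₀ _ (hd k)]

theorem foldr_bracket_eq_mul (hd : ∀ i, d i ≠ 0)
    (hcc : ∀ i j k, cc i j k = d k / (d i * d j) * c i j k) (l : List (Fin n → ℝ))
    (w : Fin n → ℝ) :
    l.foldr (bracket cc) w = d * (l.map (· / d)).foldr (bracket c) (w / d) := by
  have hcancel : ∀ F : Fin n → ℝ, d * F / d = F := fun F =>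
    funext fun k => mul_div_cancel_left₀ _ (hd k)
  induction l with
  | nil => exact funext fun k => (mul_div_cancel₀ _ (hd k)).symm
  | cons u l ih => rw [List.foldr_cons, bracket_eq_mul_bracket_div hd hcc, ih, hcancel]; rfl

theorem skew_of_mem_closure_diagOrbit (hskew : ∀ i j k, c i j k = -c j i k)
    (hcc : cc ∈ closure (diagOrbit c)) (i j k : Fin n) : cc i j k = -cc j i k := by
  refine closure_minimal (t := {cd : Fin n → Fin n → Fin n → ℝ | cd i j k = -cd j i k})
    (fun cd hcd => ?_) (isClosed_eq (by fun_prop) (by fun_prop)) hcc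
  obtain ⟨d, -, hcd⟩ := hcd
  simp only [Set.mem_ofPred_eq, hcd, hskew i j k]
  ring

theorem jacobi_of_mem_closure_diagOrbit
    (hjac : ∀ x y z : Fin n → ℝ,
      bracket c (bracket c x y) z + bracket c (bracket c y z) x + bracket c (bracket c z x) y = 0)
    (hcc : cc ∈ closure (diagOrbit c)) (x y z : Fin n → ℝ) :
    bracket cc (bracket cc x y) z + bracket cc (bracket cc y z) x +
      bracket cc (bracket cc z x) y = 0 := by
  refine closure_minimal (t := {cd : Fin n → Fin n → Fin n → ℝ | bracket cd (bracket cd x y) z +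
      bracket cd (bracket cd y z) x + bracket cd (bracket cd z x) y = 0}) (fun cd hcd => ?_)
    (isClosed_eq (by fun_prop) (by fun_prop)) hcc
  obtain ⟨d, hd, hcd⟩ := hcd
  have hdouble : ∀ u v w, bracket cd (bracket cd u v) w =
      d * bracket c (bracket c (u / d) (v / d)) (w / d) := fun u v w => by
    rw [bracket_eq_mul_bracket_div hd hcd, bracket_div hd hcd]
  simp only [Set.mem_ofPred_eq, hdouble, ← mul_add, hjac, mul_zero]

theorem nilpotent_of_mem_closure_diagOrbit {N : ℕ}
    (hnil : ∀ (v : Fin N → Fin n → ℝ) (w : Fin n → ℝ), (List.ofFn v).foldr (bracket c) w = 0)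
    (hcc : cc ∈ closure (diagOrbit c)) (v : Fin N → Fin n → ℝ) (w : Fin n → ℝ) :
    (List.ofFn v).foldr (bracket cc) w = 0 := by
  refine closure_minimal
    (t := {cd : Fin n → Fin n → Fin n → ℝ | (List.ofFn v).foldr (bracket cd) w = 0})
    (fun cd hcd => ?_) (isClosed_eq (continuous_foldr_bracket _ _) continuous_const) hcc
  obtain ⟨d, hd, hcd⟩ := hcd
  rw [Set.mem_ofPred_eq, foldr_bracket_eq_mul hd hcd, List.map_ofFn]
  rw [hnil, mul_zero]

theorem IsNiceNilpotent.of_mem_closure_diagOrbit (hc : IsNiceNilpotent c)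
    (hcc : cc ∈ closure (diagOrbit c)) (hsupp : ∀ i j k, cc i j k ≠ 0 → c i j k ≠ 0) :
    IsNiceNilpotent cc where
  skew := skew_of_mem_closure_diagOrbit hc.skew hcc
  jacobi := jacobi_of_mem_closure_diagOrbit hc.jacobi hcc
  nilpotent := hc.nilpotent.imp fun _ hN => nilpotent_of_mem_closure_diagOrbit hN hcc
  nice_k i j k k' h h' := hc.nice_k i j k k' (hsupp _ _ _ h) (hsupp _ _ _ h')
  nice_j i j j' k h h' := hc.nice_j i j j' k (hsupp _ _ _ h) (hsupp _ _ _ h')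

end DiagonalOrbit

section Ricci

variable {n : ℕ}

noncomputable def bracketWeight (cc : Fin n → Fin n → Fin n → ℝ) (gv : Fin n → ℝ)
    (i j k : Fin n) : ℝ :=
  cc i j k ^ 2 * gv k / (gv i * gv j)

variable {cc : Fin n → Fin n → Fin n → ℝ} {gv : Fin n → ℝ}

theorem bracketWeight_ne_zero_iff (hgv : ∀ i, gv i ≠ 0) {i j k : Fin n} :
    bracketWeight cc gv i j k ≠ 0 ↔ cc i j k ≠ 0 := by
  simp [bracketWeight, hgv]

theorem ric_diagonal_apply (hgv : ∀ i, gv i ≠ 0) (h k : Fin n) :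
    Ric cc (Matrix.diagonal gv) h k =
      1 / 4 * ∑ i, ∑ l, (gv i)⁻¹ * (gv l)⁻¹ * gv h * cc i l k * cc i l h -
        1 / 2 * ∑ j, ∑ i, (gv k)⁻¹ * (gv j)⁻¹ * gv i * cc h j i * cc k j i := by
  have hinv : (Matrix.diagonal gv)⁻¹ = Matrix.diagonal fun i => (gv i)⁻¹ :=
    Matrix.inv_eq_right_inv (by simp [hgv])
  simp only [Ric, Matrix.of_apply, hinv, Matrix.diagonal_apply, mul_ite, ite_mul, mul_zero,
    zero_mul, Finset.sum_ite_irrel, Finset.sum_const_zero, Finset.sum_ite_eq,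
    Finset.mem_univ, if_true]

variable (hskew : ∀ i j k, cc i j k = -cc j i k)
include hskew

theorem bracketWeight_comm (i j k : Fin n) :
    bracketWeight cc gv i j k = bracketWeight cc gv j i k := by
  rw [bracketWeight, bracketWeight, hskew i j k]
  ring

theorem bracketWeight_self (i k : Fin n) : bracketWeight cc gv i i k = 0 := by
  have : cc i i k = 0 := by linarith [hskew i i k]
  simp [bracketWeight, this]

theorem ric_diagonal_apply_self (hgv : ∀ i, gv i ≠ 0) (h : Fin n) :
    Ric cc (Matrix.diagonal gv) h h =
      1 / 4 * ∑ i, ∑ j, ∑ l, bracketWeight cc gv i j l * rootRow i j l h := by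
  have hin : ∑ i, ∑ l, (gv i)⁻¹ * (gv l)⁻¹ * gv h * cc i l h * cc i l h =
      ∑ i, ∑ j, bracketWeight cc gv i j h :=
    Fintype.sum_congr _ _ fun i => Fintype.sum_congr _ _ fun l => by rw [bracketWeight]; ring
  have hout : ∑ j, ∑ i, (gv h)⁻¹ * (gv j)⁻¹ * gv i * cc h j i * cc h j i =
      ∑ j, ∑ l, bracketWeight cc gv h j l :=
    Fintype.sum_congr _ _ fun j => Fintype.sum_congr _ _ fun l => by rw [bracketWeight]; ring
  have hmid : ∑ i, ∑ l, bracketWeight cc gv i h l = ∑ j, ∑ l, bracketWeight cc gv h j l :=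
    Fintype.sum_congr _ _ fun i => Fintype.sum_congr _ _ fun l => bracketWeight_comm hskew i h l
  rw [ric_diagonal_apply hgv, sum_mul_rootRow, hin, hout, hmid]
  ring

theorem ric_diagonal_apply_of_ne (hnice_k : ∀ i j k k', cc i j k ≠ 0 → cc i j k' ≠ 0 → k = k')
    (hnice_j : ∀ i j j' k, cc i j k ≠ 0 → cc i j' k ≠ 0 → j = j') (hgv : ∀ i, gv i ≠ 0)
    {h k : Fin n} (hhk : h ≠ k) : Ric cc (Matrix.diagonal gv) h k = 0 := by
  have hin : ∀ i l, cc i l k * cc i l h = 0 := fun i l => by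
    by_contra hne
    obtain ⟨hk, hh⟩ := mul_ne_zero_iff.mp hne
    exact hhk (hnice_k i l k h hk hh).symm
  have hout : ∀ j i, cc h j i * cc k j i = 0 := fun j i => by
    by_contra hne
    obtain ⟨hh, hk⟩ := mul_ne_zero_iff.mp hne
    refine hhk (hnice_j j h k i ?_ ?_) <;> rwa [hskew, neg_ne_zero]
  simp [ric_diagonal_apply hgv, mul_assoc, hin, hout]

theorem einsteinE_diagonal_iff (hnice_k : ∀ i j k k', cc i j k ≠ 0 → cc i j k' ≠ 0 → k = k')
    (hnice_j : ∀ i j j' k, cc i j k ≠ 0 → cc i j' k ≠ 0 → j = j') (hgv : ∀ i, gv i ≠ 0) :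
    EinsteinE cc (Matrix.diagonal gv) ↔ ∀ h, ∑ i, ∑ j, ∑ l,
      (if i < j then bracketWeight cc gv i j l else 0) * rootRow i j l h = 1 := by
  have hric : Ric cc (Matrix.diagonal gv) = Matrix.diagonal fun h =>
      1 / 4 * ∑ i, ∑ j, ∑ l, bracketWeight cc gv i j l * rootRow i j l h := by
    ext h k
    by_cases hhk : h = k
    · rw [hhk, ric_diagonal_apply_self hskew hgv, Matrix.diagonal_apply_eq]
    · rw [ric_diagonal_apply_of_ne hskew hnice_k hnice_j hgv hhk, Matrix.diagonal_apply_ne _ hhk]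
  have hhalf : ∀ h, ∑ i, ∑ j, ∑ l, bracketWeight cc gv i j l * rootRow i j l h =
      2 * ∑ i, ∑ j, ∑ l, (if i < j then bracketWeight cc gv i j l else 0) * rootRow i j l h := by
    intro h
    rw [Fintype.sum_sum_eq_two_mul_sum_sum_lt]
    · simp only [ite_mul, zero_mul, Finset.sum_ite_irrel, Finset.sum_const_zero]
    · intro i j
      simp only [bracketWeight_comm hskew i j, rootRow_comm i j]
    · intro i
      simp [bracketWeight_self hskew]
  rw [EinsteinE, hric, Matrix.smul_one_eq_diagonal, Matrix.diagonal_eq_diagonal_iff]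
  refine forall_congr' fun h => ?_
  rw [hhalf h]
  constructor <;> intro <;> linarith

end Ricci

namespace SurjectiveType

open scoped Matrix

variable {n : ℕ} {c : Fin n → Fin n → Fin n → ℝ}

theorem exists_sub_sub_eq_zmod (hc : SurjectiveType c) (y : Fin n → Fin n → Fin n → ZMod 2) :
    ∃ s : Fin n → ZMod 2, ∀ i j k, i < j → c i j k ≠ 0 → s k - s i - s j = y i j k := by
  obtain ⟨s, hs⟩ := hc y
  exact ⟨s, fun i j k hij hijk => by rw [hs i j k hij hijk, ← sum_rootRow_mul]; rfl⟩

theorem exists_rootMatrix_mul_eq_one (hc : SurjectiveType c) :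
    ∃ B : Matrix (Fin n) (nonzeroBrackets c) ℝ,
      (rootMatrix c).map (Int.cast : ℤ → ℝ) * B = 1 := by
  have : Fact (1 < 2) := ⟨one_lt_two⟩
  refine (rootMatrix c).exists_map_intCast_mul_eq_one_of_zmod (p := 2) ?_
  rw [← Matrix.mulVec_surjective_iff_exists_right_inverse]
  intro y
  obtain ⟨s, hs⟩ := hc fun i j k => if h : (i, j, k) ∈ nonzeroBrackets c then y ⟨_, h⟩ else 0
  refine ⟨s, funext fun I => ?_⟩
  have hI := mem_nonzeroBrackets.mp I.2
  have := hs _ _ _ hI.1 hI.2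
  rw [dif_pos I.2] at this
  exact this.symm

theorem exists_sub_sub_eq (hc : SurjectiveType c) (t : Fin n → Fin n → Fin n → ℝ) :
    ∃ a : Fin n → ℝ, ∀ i j k, i < j → c i j k ≠ 0 → a k - a i - a j = t i j k := by
  obtain ⟨B, hB⟩ := hc.exists_rootMatrix_mul_eq_one
  let t' : nonzeroBrackets c → ℝ := fun I => t I.1.1 I.1.2.1 I.1.2.2
  refine ⟨B *ᵥ t', fun i j k hij hijk => ?_⟩
  have := congrFun (Matrix.mulVec_mulVec t' ((rootMatrix c).map Int.cast) B)
    ⟨(i, j, k), mem_nonzeroBrackets.mpr ⟨hij, hijk⟩⟩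
  rw [hB, Matrix.one_mulVec] at this
  rw [← sum_rootRow_mul]
  exact this

theorem eq_of_sum_mul_rootRow_eq (hc : SurjectiveType c) {X Y : Fin n → Fin n → Fin n → ℝ}
    (hX : ∀ i j k, ¬(i < j ∧ c i j k ≠ 0) → X i j k = 0)
    (hY : ∀ i j k, ¬(i < j ∧ c i j k ≠ 0) → Y i j k = 0)
    (hXY : ∀ h, ∑ i, ∑ j, ∑ k, X i j k * ((rootRow i j k h : ℤ) : ℝ) =
      ∑ i, ∑ j, ∑ k, Y i j k * ((rootRow i j k h : ℤ) : ℝ)) :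
    X = Y := by
  obtain ⟨B, hB⟩ := hc.exists_rootMatrix_mul_eq_one
  let restrict (Z : Fin n → Fin n → Fin n → ℝ) : nonzeroBrackets c → ℝ :=
    fun I => Z I.1.1 I.1.2.1 I.1.2.2
  have hvecMul : ∀ Z, (∀ i j k, ¬(i < j ∧ c i j k ≠ 0) → Z i j k = 0) →
      restrict Z ᵥ* (rootMatrix c).map Int.cast =
        fun h => ∑ i, ∑ j, ∑ k, Z i j k * ((rootRow i j k h : ℤ) : ℝ) := fun Z hZ =>
    funext fun h => sum_nonzeroBrackets (f := fun i j k => Z i j k * ((rootRow i j k h : ℤ) : ℝ))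
      fun i j k hijk => by rw [hZ i j k hijk, zero_mul]
  have hrestrict : restrict X = restrict Y := by
    rw [← Matrix.vecMul_one (restrict X), ← Matrix.vecMul_one (restrict Y), ← hB,
      ← Matrix.vecMul_vecMul, ← Matrix.vecMul_vecMul, hvecMul X hX, hvecMul Y hY, funext hXY]
  funext i j k
  by_cases hijk : i < j ∧ c i j k ≠ 0
  · exact congrFun hrestrict ⟨(i, j, k), mem_nonzeroBrackets.mpr hijk⟩
  · rw [hX i j k hijk, hY i j k hijk]

theorem exists_rescaling (hc : SurjectiveType c) {r : Fin n → Fin n → Fin n → ℝ}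
    (hr : ∀ i j k, i < j → c i j k ≠ 0 → r i j k ≠ 0) :
    ∃ d : Fin n → ℝ, (∀ i, d i ≠ 0) ∧
      ∀ i j k, i < j → c i j k ≠ 0 → d k / (d i * d j) = r i j k := by
  obtain ⟨s, hs⟩ := hc.exists_sub_sub_eq_zmod fun i j k => if r i j k < 0 then 1 else 0
  obtain ⟨a, ha⟩ := hc.exists_sub_sub_eq fun i j k => Real.log |r i j k|
  refine ⟨fun i => (-1) ^ (s i).val * Real.exp (a i), fun i => by positivity, ?_⟩
  intro i j k hij hijk
  have hsign : (-1 : ℝ) ^ (s k).val / ((-1) ^ (s i).val * (-1) ^ (s j).val) * |r i j k|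
      = r i j k := by
    rw [← neg_one_pow_val_sub_sub, hs i j k hij hijk]
    split_ifs with hneg
    · simp [abs_of_neg hneg, ZMod.val_one]
    · simp [abs_of_nonneg (not_lt.mp hneg)]
  calc (-1) ^ (s k).val * Real.exp (a k) / ((-1) ^ (s i).val * Real.exp (a i) *
        ((-1) ^ (s j).val * Real.exp (a j)))
      = (-1 : ℝ) ^ (s k).val / ((-1) ^ (s i).val * (-1) ^ (s j).val) *
          Real.exp (a k - a i - a j) := by
        rw [Real.exp_sub, Real.exp_sub]
        field_simp
    _ = r i j k := by
        rw [ha i j k hij hijk, Real.exp_log (abs_pos.mpr (hr i j k hij hijk)), hsign]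

theorem mul_mem_diagOrbit (hc : SurjectiveType c) (hskew : ∀ i j k, c i j k = -c j i k)
    {r : Fin n → Fin n → Fin n → ℝ} (hr_symm : ∀ i j k, r i j k = r j i k)
    (hr : ∀ i j k, r i j k ≠ 0) :
    (fun i j k => r i j k * c i j k) ∈ diagOrbit c := by
  obtain ⟨d, hd, hdr⟩ := hc.exists_rescaling fun i j k _ _ => hr i j k
  refine ⟨d, hd, fun i j k => ?_⟩
  by_cases hijk : c i j k = 0
  · simp [hijk]
  have hjik : c j i k ≠ 0 := by rw [hskew]; exact neg_ne_zero.mpr hijk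
  rcases lt_trichotomy i j with hij | rfl | hji
  · rw [hdr i j k hij hijk]
  · exact absurd (hskew i i k) fun h => hijk (by linarith)
  · rw [mul_comm (d i), hdr j i k hji hjik, hr_symm]

theorem mem_closure_diagOrbit (hc : SurjectiveType c) (hskew : ∀ i j k, c i j k = -c j i k)
    {cc : Fin n → Fin n → Fin n → ℝ} (hcc : ∀ i j k, cc i j k = c i j k ∨ cc i j k = 0)
    (hcc_skew : ∀ i j k, cc i j k = -cc j i k) :
    cc ∈ closure (diagOrbit c) := by
  let r : ℕ → Fin n → Fin n → Fin n → ℝ := fun m i j k => if cc i j k = 0 then 1 / (m + 1) else 1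
  have hr_symm : ∀ m i j k, r m i j k = r m j i k := fun m i j k => by
    simp only [r, hcc_skew i j k, neg_eq_zero]
  have hr : ∀ m i j k, r m i j k ≠ 0 := fun m i j k => by
    simp only [r]; split_ifs <;> positivity
  refine mem_closure_of_tendsto (f := fun m i j k => r m i j k * c i j k) (b := Filter.atTop) ?_
    (Filter.Eventually.of_forall fun m => hc.mul_mem_diagOrbit hskew (hr_symm m) (hr m))
  refine tendsto_pi_nhds.mpr fun i => tendsto_pi_nhds.mpr fun j => tendsto_pi_nhds.mpr fun k => ?_
  by_cases h0 : cc i j k = 0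
  · simpa [r, h0] using tendsto_one_div_add_atTop_nhds_zero_nat.mul_const (c i j k)
  · simp only [r, if_neg h0, one_mul, (hcc i j k).resolve_right h0]
    exact tendsto_const_nhds

section Einstein

variable {cc X : Fin n → Fin n → Fin n → ℝ} (hc : SurjectiveType c)
  (hskew : ∀ i j k, cc i j k = -cc j i k)
  (hnice_k : ∀ i j k k', cc i j k ≠ 0 → cc i j k' ≠ 0 → k = k')
  (hnice_j : ∀ i j j' k, cc i j k ≠ 0 → cc i j' k ≠ 0 → j = j')
  (hX : ∀ i j k, ¬(i < j ∧ c i j k ≠ 0) → X i j k = 0)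
  (hK : ∀ h, ∑ i, ∑ j, ∑ k, X i j k * ((rootRow i j k h : ℤ) : ℝ) = 1)
include hc hskew hnice_k hnice_j hX hK

theorem ne_zero_iff_of_einsteinE (hsub : ∀ i j k, cc i j k ≠ 0 → c i j k ≠ 0)
    {gv : Fin n → ℝ} (hgv : ∀ i, gv i ≠ 0) (hE : EinsteinE cc (Matrix.diagonal gv))
    {i j k : Fin n} (hij : i < j) : cc i j k ≠ 0 ↔ X i j k ≠ 0 := by
  have hW : (fun i j l => if i < j then bracketWeight cc gv i j l else 0) = X := by
    refine hc.eq_of_sum_mul_rootRow_eq (fun i j l hijl => ?_) hX fun h =>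
      ((einsteinE_diagonal_iff hskew hnice_k hnice_j hgv).mp hE h).trans (hK h).symm
    split_ifs with hij
    · have hcc : cc i j l = 0 := by_contra fun h => hijl ⟨hij, hsub i j l h⟩
      simp [bracketWeight, hcc]
    · rfl
  have := congrFun (congrFun (congrFun hW i) j) k
  rw [if_pos hij] at this
  rw [← this, bracketWeight_ne_zero_iff hgv]

theorem exists_einsteinE_diagonal (hccX : ∀ i j k, i < j → (cc i j k ≠ 0 ↔ X i j k ≠ 0)) :
    ∃ gv : Fin n → ℝ, (∀ i, gv i ≠ 0) ∧ EinsteinE cc (Matrix.diagonal gv) := by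
  obtain ⟨d, hd, hdr⟩ := hc.exists_rescaling
    (r := fun i j k => if X i j k = 0 then 1 else X i j k / cc i j k ^ 2) fun i j k hij _ => by
      split_ifs with hX0
      · exact one_ne_zero
      · exact div_ne_zero hX0 (pow_ne_zero 2 ((hccX i j k hij).mpr hX0))
  have hW : ∀ i j l, (if i < j then bracketWeight cc d i j l else 0) = X i j l := by
    intro i j l
    split_ifs with hij
    · by_cases hX0 : X i j l = 0
      · have hcc : cc i j l = 0 := not_not.mp fun h => (hccX i j l hij).mp h hX0
        simp [bracketWeight, hcc, hX0]
      · have hcijl : c i j l ≠ 0 := fun h => hX0 (hX i j l fun h' => h'.2 h)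
        have hcc : cc i j l ≠ 0 := (hccX i j l hij).mpr hX0
        rw [bracketWeight, mul_div_assoc, hdr i j l hij hcijl, if_neg hX0]
        field_simp
    · exact (hX i j l fun h => hij h.1).symm
  refine ⟨d, hd, (einsteinE_diagonal_iff hskew hnice_k hnice_j hd).mpr fun h => ?_⟩
  simp only [hW]
  exact hK h

end Einstein

end SurjectiveType

section Subdiagram

variable {n : ℕ} {c cc : Fin n → Fin n → Fin n → ℝ}

theorem ne_zero_of_eq_or_eq_zero (hcc : ∀ i j k, cc i j k = c i j k ∨ cc i j k = 0)
    (i j k : Fin n) (h : cc i j k ≠ 0) : c i j k ≠ 0 :=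
  (hcc i j k).resolve_right h ▸ h

theorem eq_of_forall_lt_ne_zero (hskew : ∀ i j k, c i j k = -c j i k)
    (hcc_skew : ∀ i j k, cc i j k = -cc j i k)
    (hcc : ∀ i j k, cc i j k = c i j k ∨ cc i j k = 0)
    (hne : ∀ i j k, i < j → c i j k ≠ 0 → cc i j k ≠ 0) : cc = c := by
  funext i j k
  by_cases hc0 : c i j k = 0
  · exact (hcc i j k).elim id fun h => h.trans hc0.symm
  refine (hcc i j k).resolve_right ?_
  rcases lt_trichotomy i j with hij | rfl | hji
  · exact hne i j k hij hc0
  · exact absurd (by linarith [hskew i i k]) hc0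
  · rw [hcc_skew, neg_eq_zero]
    exact hne j i k hji (by rwa [hskew, neg_eq_zero] at hc0)

def IsTruncation (c X cc : Fin n → Fin n → Fin n → ℝ) : Prop :=
  ∀ i j k, (X i j k ≠ 0 ∨ X j i k ≠ 0 → cc i j k = c i j k) ∧
    (X i j k = 0 ∧ X j i k = 0 → cc i j k = 0)

variable {X : Fin n → Fin n → Fin n → ℝ}

theorem IsTruncation.eq_or_eq_zero (h : IsTruncation c X cc) (i j k : Fin n) :
    cc i j k = c i j k ∨ cc i j k = 0 :=
  (em (X i j k ≠ 0 ∨ X j i k ≠ 0)).imp (h i j k).1 fun hX =>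
    (h i j k).2 (by simpa [not_or] using hX)

theorem IsTruncation.skew (h : IsTruncation c X cc) (hskew : ∀ i j k, c i j k = -c j i k)
    (i j k : Fin n) : cc i j k = -cc j i k := by
  by_cases hX : X i j k ≠ 0 ∨ X j i k ≠ 0
  · rw [(h i j k).1 hX, (h j i k).1 hX.symm, hskew]
  · simp only [not_or, not_not] at hX
    rw [(h i j k).2 hX, (h j i k).2 hX.symm, neg_zero]

theorem IsTruncation.ne_zero_iff (h : IsTruncation c X cc)
    (hX : ∀ i j k, ¬(i < j ∧ c i j k ≠ 0) → X i j k = 0) {i j k : Fin n} (hij : i < j) :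
    cc i j k ≠ 0 ↔ X i j k ≠ 0 := by
  have hXji : X j i k = 0 := hX j i k fun h => lt_asymm hij h.1
  by_cases hX0 : X i j k = 0
  · simp [hX0, (h i j k).2 ⟨hX0, hXji⟩]
  · rw [(h i j k).1 (.inl hX0)]
    exact iff_of_true (fun hc0 => hX0 (hX i j k fun h => h.2 hc0)) hX0

end Subdiagram

/-- Contraction limit: for a nice nilpotent Lie algebra of surjective type whose linear
system `M_Δᵀ X = (1,…,1)` has a (then unique) solution `X`, the structure constants `c'`
obtained by keeping exactly the brackets with `x_I ≠ 0` satisfy the Jacobi identity and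
define a nice nilpotent Lie algebra (equal to the original one when all `x_I ≠ 0`),
lying in the closure of the orbit of `c` under diagonal rescalings, which admits a
diagonal metric satisfying (E); moreover it is the unique such contraction limit. -/
theorem surjective_type_contraction_limit
    (n : ℕ) (c : Fin n → Fin n → Fin n → ℝ) (hc : IsNiceNilpotent c)
    (hsurj : SurjectiveType c)
    (X : Fin n → Fin n → Fin n → ℝ)
    (hsupp : ∀ i j k : Fin n, ¬(i < j ∧ c i j k ≠ 0) → X i j k = 0)
    (hK : ∀ h : Fin n, (∑ i, ∑ j, ∑ k, X i j k * ((rootRow i j k h : ℤ) : ℝ)) = 1)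
    (c' : Fin n → Fin n → Fin n → ℝ)
    (hc'def : ∀ i j k : Fin n,
      (X i j k ≠ 0 ∨ X j i k ≠ 0 → c' i j k = c i j k) ∧
      (X i j k = 0 ∧ X j i k = 0 → c' i j k = 0)) :
    (∀ X' : Fin n → Fin n → Fin n → ℝ,
        (∀ i j k : Fin n, ¬(i < j ∧ c i j k ≠ 0) → X' i j k = 0) →
        (∀ h : Fin n, (∑ i, ∑ j, ∑ k, X' i j k * ((rootRow i j k h : ℤ) : ℝ)) = 1) →
        X' = X) ∧
    IsNiceNilpotent c' ∧
    c' ∈ closure {cc : Fin n → Fin n → Fin n → ℝ |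
        ∃ d : Fin n → ℝ, (∀ i, d i ≠ 0) ∧
          ∀ i j k : Fin n, cc i j k = d k / (d i * d j) * c i j k} ∧
    ((∀ i j k : Fin n, i < j → c i j k ≠ 0 → X i j k ≠ 0) → c' = c) ∧
    (∃ gv : Fin n → ℝ, (∀ i, gv i ≠ 0) ∧ EinsteinE c' (Matrix.diagonal gv)) ∧
    (∀ cc : Fin n → Fin n → Fin n → ℝ,
        (∀ i j k : Fin n, cc i j k = c i j k ∨ cc i j k = 0) →
        cc ∈ closure {cd : Fin n → Fin n → Fin n → ℝ |
          ∃ d : Fin n → ℝ, (∀ i, d i ≠ 0) ∧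
            ∀ i j k : Fin n, cd i j k = d k / (d i * d j) * c i j k} →
        (∃ gv : Fin n → ℝ, (∀ i, gv i ≠ 0) ∧ EinsteinE cc (Matrix.diagonal gv)) →
        ∀ i j k : Fin n, i < j → c i j k ≠ 0 → (cc i j k ≠ 0 ↔ X i j k ≠ 0)) := by
  have htrunc : IsTruncation c X c' := hc'def
  have hc'_sub := htrunc.eq_or_eq_zero
  have hclos := hsurj.mem_closure_diagOrbit hc.skew hc'_sub (htrunc.skew hc.skew)
  have hnice := hc.of_mem_closure_diagOrbit hclos (ne_zero_of_eq_or_eq_zero hc'_sub)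
  refine ⟨fun X' hsupp' hK' => hsurj.eq_of_sum_mul_rootRow_eq hsupp' hsupp fun h =>
      (hK' h).trans (hK h).symm, hnice, hclos, fun hall => ?_, ?_, ?_⟩
  · exact eq_of_forall_lt_ne_zero hc.skew (htrunc.skew hc.skew) hc'_sub fun i j k hij hc0 =>
      (htrunc.ne_zero_iff hsupp hij).mpr (hall i j k hij hc0)
  · exact hsurj.exists_einsteinE_diagonal hnice.skew hnice.nice_k hnice.nice_j hsupp hK
      fun _ _ _ hij => htrunc.ne_zero_iff hsupp hij
  · rintro cc hcc hcc_clos ⟨gv, hgv, hE⟩ i j k hij -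
    have hnice_cc := hc.of_mem_closure_diagOrbit hcc_clos (ne_zero_of_eq_or_eq_zero hcc)
    exact hsurj.ne_zero_iff_of_einsteinE hnice_cc.skew hnice_cc.nice_k hnice_cc.nice_j hsupp hK
      (ne_zero_of_eq_or_eq_zero hcc) hgv hE hij
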